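/- arXiv:0804.1404 — 3 statements merged into one kernel-verified Lean document; each statement's English description precedes it below -/
import Mathlib

section
/- The optimal number of ebits for a CSS entanglement-assisted quantum code built from classical binary codes with parity check matrices H_1 and H_2 is rank(H_1 H_2^T), i.e., half the rank of the symplectic product matrix of the CSS check matrix [H_1 0 | 0 H_2] equals rank(H_1 H_2^T). -/
open Matrix

/-- A submodule product is linearly equivalent to the product of the submodules. -/
def prodSubEquiv {R M N : Type*} [Ring R] [AddCommGroup M] [AddCommGroup N]
    [Module R M] [Module R N] (p : Submodule R M) (q : Submodule R N) :
    (p.prod q) ≃ₗ[R] p × q where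
  toFun x := (⟨x.1.1, x.2.1⟩, ⟨x.1.2, x.2.2⟩)
  invFun x := ⟨(x.1.1, x.2.1), ⟨x.1.2, x.2.2⟩⟩
  map_add' x y := rfl
  map_smul' r x := rfl
  left_inv x := rfl
  right_inv x := rfl

lemma finrank_prodSub {K M N : Type*} [Field K] [AddCommGroup M] [AddCommGroup N]
    [Module K M] [Module K N] [FiniteDimensional K M] [FiniteDimensional K N]
    (p : Submodule K M) (q : Submodule K N) :
    Module.finrank K (p.prod q) = Module.finrank K p + Module.finrank K q := by
  rw [(prodSubEquiv p q).finrank_eq, Module.finrank_prod]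

lemma rank_fromBlocks_antidiag {K : Type*} [Field K] {m₁ m₂ n₁ n₂ : Type*}
    [Fintype m₁] [Fintype m₂] [Fintype n₁] [Fintype n₂]
    [DecidableEq n₁] [DecidableEq n₂]
    (B : Matrix m₁ n₂ K) (C : Matrix m₂ n₁ K) :
    (fromBlocks 0 B C 0).rank = B.rank + C.rank := by
  classical
  let e : ((m₁ ⊕ m₂) → K) ≃ₗ[K] (m₁ → K) × (m₂ → K) :=
    LinearEquiv.sumArrowLequivProdArrow m₁ m₂ K K
  have hrange : LinearMap.range (fromBlocks 0 B C 0).mulVecLin =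
      Submodule.map (e.symm : ((m₁ → K) × (m₂ → K)) →ₗ[K] (m₁ ⊕ m₂ → K))
        ((LinearMap.range B.mulVecLin).prod (LinearMap.range C.mulVecLin)) := by
    ext y
    constructor
    · rintro ⟨v, rfl⟩
      refine ⟨(B *ᵥ (v ∘ Sum.inr), C *ᵥ (v ∘ Sum.inl)),
        ⟨⟨v ∘ Sum.inr, rfl⟩, ⟨v ∘ Sum.inl, rfl⟩⟩, ?_⟩
      have hv : v = Sum.elim (v ∘ Sum.inl) (v ∘ Sum.inr) := by
        ext (i | i) <;> rfl
      simp only [mulVecLin_apply]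
      rw [hv, fromBlocks_mulVec]
      ext (i | i) <;> simp [e, LinearEquiv.sumArrowLequivProdArrow]
    · rintro ⟨⟨p, q⟩, ⟨⟨a, ha⟩, ⟨b, hb⟩⟩, rfl⟩
      refine ⟨Sum.elim b a, ?_⟩
      simp only [Matrix.mulVecLin_apply] at ha hb
      simp only [mulVecLin_apply, fromBlocks_mulVec]
      ext (i | i) <;>
        simp [e, LinearEquiv.sumArrowLequivProdArrow, ha, hb]
  rw [Matrix.rank, Matrix.rank, Matrix.rank, hrange,
    LinearEquiv.finrank_map_eq e.symm, finrank_prodSub]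

theorem stmt_9 (n m₁ m₂ : ℕ)
    (H₁ : Matrix (Fin m₁) (Fin n) (ZMod 2))
    (H₂ : Matrix (Fin m₂) (Fin n) (ZMod 2)) :
    letI HZ : Matrix (Fin m₁ ⊕ Fin m₂) (Fin n) (ZMod 2) := Matrix.fromRows H₁ 0
    letI HX : Matrix (Fin m₁ ⊕ Fin m₂) (Fin n) (ZMod 2) := Matrix.fromRows 0 H₂
    (HX * HZ.transpose + HZ * HX.transpose).rank = 2 * (H₁ * H₂.transpose).rank := by
  have h1 : fromRows (0 : Matrix (Fin m₁) (Fin n) (ZMod 2)) H₂ * (fromRows H₁ (0 : Matrix (Fin m₂) (Fin n) (ZMod 2)))ᵀ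
      + fromRows H₁ (0 : Matrix (Fin m₂) (Fin n) (ZMod 2)) * (fromRows (0 : Matrix (Fin m₁) (Fin n) (ZMod 2)) H₂)ᵀ =
      fromBlocks 0 (H₁ * H₂ᵀ) (H₂ * H₁ᵀ) 0 := by
    rw [transpose_fromRows, transpose_fromRows, fromRows_mul_fromCols,
      fromRows_mul_fromCols, fromBlocks_add]
    simp
  rw [h1, rank_fromBlocks_antidiag]
  have h2 : (H₂ * H₁ᵀ).rank = (H₁ * H₂ᵀ).rank := by
    rw [← Matrix.rank_transpose (H₁ * H₂ᵀ), Matrix.transpose_mul, Matrix.transpose_transpose]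
  rw [h2]; ring
end

section
/- The symplectic product matrix of the quantum check matrix obtained from a GF(4) parity check matrix H via the stacking [ωH; ω̄H] (followed by the GF(4)-to-binary isomorphism γ) has GF(2)-rank equal to 2·rank(H H†), so the code requires c = rank(H H†) ebits. -/
/-- Entrywise trace of GF(4) over GF(2), with values in `ZMod 2`. -/
noncomputable def gf4TrToGF2 (x : GaloisField 2 2) : ZMod 2 :=
  open scoped Classical in
  if x + x ^ 2 = 0 then 0 else 1

/-- Conjugate transpose over GF(4), where conjugation is `x ↦ x²`. -/
noncomputable def gf4Dagger {m n : Type*}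
    (A : Matrix m n (GaloisField 2 2)) :
    Matrix n m (GaloisField 2 2) :=
  fun i j => (A j i) ^ 2

namespace Stmt14Aux

open Module LinearMap

local notation "F" => GaloisField 2 2
local notation "K" => ZMod 2

lemma two_eq_zero : (2 : F) = 0 := by
  have := CharP.cast_eq_zero F 2
  simpa using this

lemma pow4 (x : F) : x ^ 4 = x := by
  haveI : Fintype F := Fintype.ofFinite F
  have hc : Fintype.card F = 4 := by
    have := GaloisField.card 2 2 (by norm_num)
    simpa [Nat.card_eq_fintype_card] using this
  have h := FiniteField.pow_card x
  rwa [hc] at h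

lemma alg_tr (x : F) : algebraMap K F (gf4TrToGF2 x) = x + x ^ 2 := by
  classical
  have h4 := pow4 x
  have h2 := two_eq_zero
  unfold gf4TrToGF2
  split_ifs with h
  · simp [h]
  · have hsq : (x + x ^ 2) ^ 2 = x + x ^ 2 := by linear_combination h4 + x ^ 3 * h2
    have h0 : (x + x ^ 2) * (x + x ^ 2 - 1) = 0 := by linear_combination hsq
    rcases mul_eq_zero.mp h0 with h' | h'
    · exact absurd h' h
    · have : x + x ^ 2 = 1 := by linear_combination h'
      simp [this]

lemma omega_cube {ω : F} (hω : ω ^ 2 = ω + 1) : ω ^ 3 = 1 := by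
  linear_combination (ω + 1) * hω + ω * two_eq_zero

theorem rank_aux {ι : Type} [Fintype ι] [DecidableEq ι]
    (ω : F) (hω : ω ^ 2 = ω + 1) (M : Matrix ι ι F)
    (Ω : Matrix (ι ⊕ ι) (ι ⊕ ι) K)
    (hll : ∀ i j, Ω (Sum.inl i) (Sum.inl j) = gf4TrToGF2 (M i j))
    (hlr : ∀ i j, Ω (Sum.inl i) (Sum.inr j) = gf4TrToGF2 (ω ^ 2 * M i j))
    (hrl : ∀ i j, Ω (Sum.inr i) (Sum.inl j) = gf4TrToGF2 (ω * M i j))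
    (hrr : ∀ i j, Ω (Sum.inr i) (Sum.inr j) = gf4TrToGF2 (M i j)) :
    Ω.rank = 2 * M.rank := by
  have h2 := two_eq_zero
  have hω0 : ω ≠ 0 := by
    intro h; rw [h] at hω; simp at hω
  have hω1 : ω ≠ 1 := by
    intro h; rw [h] at hω
    exact one_ne_zero (by linear_combination hω + h2)
  -- the GF(2)-linear identification ((ι ⊕ ι) → GF(2)) ≃ (ι → GF(4))
  let eL : ((ι ⊕ ι) → K) →ₗ[K] (ι → F) :=
    { toFun := fun v i =>
        algebraMap K F (v (Sum.inl i)) + ω * algebraMap K F (v (Sum.inr i))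
      map_add' := by intro v w; funext i; simp only [Pi.add_apply, map_add]; ring
      map_smul' := by
        intro c v; funext i
        simp only [Pi.smul_apply, smul_eq_mul, map_mul, RingHom.id_apply,
          Algebra.smul_def]
        ring }
  have heL : ∀ v i, eL v i =
      algebraMap K F (v (Sum.inl i)) + ω * algebraMap K F (v (Sum.inr i)) :=
    fun _ _ => rfl
  have hZcases : ∀ b : K, b = 0 ∨ b = 1 := by decide
  have hsurj : Function.Surjective eL := by
    intro u
    refine ⟨Sum.elim (fun i => gf4TrToGF2 (ω ^ 2 * u i)) (fun i => gf4TrToGF2 (u i)), ?_⟩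
    funext i
    rw [heL]
    simp only [Sum.elim_inl, Sum.elim_inr]
    rw [alg_tr, alg_tr]
    linear_combination (u i + (ω ^ 2 + ω + 2) * (u i) ^ 2) * hω +
      (ω * (u i) + (2 * ω + 1) * (u i) ^ 2) * h2
  have hinj : Function.Injective eL := by
    rw [injective_iff_map_eq_zero]
    intro v hv
    have key : ∀ i, algebraMap K F (v (Sum.inl i)) + ω * algebraMap K F (v (Sum.inr i)) = 0 :=
      fun i => by simpa [heL] using congrFun hv i
    have main : ∀ i, v (Sum.inl i) = 0 ∧ v (Sum.inr i) = 0 := by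
      intro i
      rcases hZcases (v (Sum.inl i)) with ha | ha <;>
        rcases hZcases (v (Sum.inr i)) with hb | hb
      · exact ⟨ha, hb⟩
      · exfalso; have h := key i; rw [ha, hb] at h; simp at h
        exact hω0 h
      · exfalso; have h := key i; rw [ha, hb] at h; simp at h
      · exfalso; have h := key i; rw [ha, hb] at h
        simp only [map_one, mul_one] at h
        exact hω1 (by linear_combination h - h2)
    funext s
    rcases s with i | i
    · exact (main i).1
    · exact (main i).2
  -- the key pointwise identity
  have key : ∀ (v : (ι ⊕ ι) → K) (i : ι),
      algebraMap K F ((Ω.mulVec v) (Sum.inl i)) +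
        ω * algebraMap K F ((Ω.mulVec v) (Sum.inr i))
      = ∑ j, M i j *
          (algebraMap K F (v (Sum.inr j)) + ω * algebraMap K F (v (Sum.inl j))) := by
    intro v i
    have hmv : ∀ r, (Ω.mulVec v) r =
        (∑ j, Ω r (Sum.inl j) * v (Sum.inl j)) + ∑ j, Ω r (Sum.inr j) * v (Sum.inr j) := by
      intro r
      simp [Matrix.mulVec, dotProduct, Fintype.sum_sum_type]
    rw [hmv, hmv, map_add, map_add, map_sum, map_sum, map_sum, map_sum]
    simp only [map_mul, hll, hlr, hrl, hrr, alg_tr]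
    rw [mul_add, Finset.mul_sum, Finset.mul_sum]
    rw [add_add_add_comm, ← Finset.sum_add_distrib, ← Finset.sum_add_distrib,
      ← Finset.sum_add_distrib]
    refine Finset.sum_congr rfl fun j _ => ?_
    set m := M i j
    set a := algebraMap K F (v (Sum.inl j))
    set b := algebraMap K F (v (Sum.inr j))
    linear_combination (m * a + (ω + 1) * m ^ 2 * a + m * b + (ω ^ 2 + ω + 2) * m ^ 2 * b) * hω +
      (m * a + (ω + 1) * m ^ 2 * a + ω * m * b + (2 * ω + 1) * m ^ 2 * b) * h2
  -- assemble into a composition identity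
  let sE : ((ι ⊕ ι) → K) ≃ₗ[K] ((ι ⊕ ι) → K) :=
    LinearEquiv.funCongrLeft K K (Equiv.sumComm ι ι)
  have hcomp : eL.comp Ω.mulVecLin =
      (M.mulVecLin.restrictScalars K).comp (eL.comp sE.toLinearMap) := by
    apply LinearMap.ext; intro v
    funext i
    show eL (Ω.mulVec v) i = (M.mulVec (eL (sE v))) i
    rw [heL, key]
    simp [Matrix.mulVec, dotProduct, heL, sE, LinearEquiv.funCongrLeft_apply,
      LinearMap.funLeft_apply, Equiv.sumComm_apply]
  -- rank computations
  let eE : ((ι ⊕ ι) → K) ≃ₗ[K] (ι → F) := LinearEquiv.ofBijective eL ⟨hinj, hsurj⟩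
  have hEsurj : Function.Surjective (eL.comp sE.toLinearMap) := by
    intro u
    obtain ⟨v, hv⟩ := hsurj u
    exact ⟨sE.symm v, by simp [hv]⟩
  have hr1 : LinearMap.range (eL.comp Ω.mulVecLin) =
      (LinearMap.range Ω.mulVecLin).map eL := LinearMap.range_comp _ _
  have hr2 : LinearMap.range ((M.mulVecLin.restrictScalars K).comp (eL.comp sE.toLinearMap)) =
      LinearMap.range (M.mulVecLin.restrictScalars K) :=
    LinearMap.range_comp_of_range_eq_top _ (LinearMap.range_eq_top.mpr hEsurj)
  have hr3 : LinearMap.range (M.mulVecLin.restrictScalars K) =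
      (LinearMap.range M.mulVecLin).restrictScalars K := by
    ext x
    simp [LinearMap.mem_range]
  have hmap : finrank K ((LinearMap.range Ω.mulVecLin).map eL)
      = finrank K (LinearMap.range Ω.mulVecLin) := by
    have : ((LinearMap.range Ω.mulVecLin).map (eE : ((ι ⊕ ι) → K) →ₗ[K] (ι → F)))
        = (LinearMap.range Ω.mulVecLin).map eL := by
      congr 1
    rw [← this]
    exact LinearEquiv.finrank_map_eq eE _
  have efr : finrank F ((LinearMap.range M.mulVecLin).restrictScalars K) = M.rank :=
    (Submodule.restrictScalarsEquiv K F (ι → F) (LinearMap.range M.mulVecLin)).finrank_eq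
  have etower : finrank K F * finrank F ((LinearMap.range M.mulVecLin).restrictScalars K)
      = finrank K ((LinearMap.range M.mulVecLin).restrictScalars K) :=
    Module.finrank_mul_finrank K F _
  have e3 : finrank K F = 2 := GaloisField.finrank 2 (by norm_num)
  calc Ω.rank = finrank K (LinearMap.range Ω.mulVecLin) := rfl
    _ = finrank K ((LinearMap.range Ω.mulVecLin).map eL) := hmap.symm
    _ = finrank K (LinearMap.range (eL.comp Ω.mulVecLin)) := by rw [hr1]
    _ = finrank K ((LinearMap.range M.mulVecLin).restrictScalars K) := by
        rw [hcomp, hr2, hr3]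
    _ = 2 * M.rank := by rw [← etower, e3, efr]

end Stmt14Aux

theorem stmt_14 (n k : ℕ) (ω : GaloisField 2 2) (hω : ω ^ 2 = ω + 1)
    (H : Matrix (Fin (n - k)) (Fin n) (GaloisField 2 2)) :
    -- the rows of the stacked matrix [ωH; ω̄H]
    letI Row : (Fin (n - k) ⊕ Fin (n - k)) → Fin n → GaloisField 2 2 :=
      Sum.elim (fun i t => ω * H i t) (fun i t => ω ^ 2 * H i t)
    -- the symplectic product matrix: symplectic products of rows, computed
    -- as traces of Hermitian inner products of the GF(4) rows
    letI Ω : Matrix (Fin (n - k) ⊕ Fin (n - k)) (Fin (n - k) ⊕ Fin (n - k)) (ZMod 2) :=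
      fun r s => gf4TrToGF2 (∑ t, Row r t * (Row s t) ^ 2)
    Ω.rank = 2 * (H * gf4Dagger H).rank := by
  have hω3 := Stmt14Aux.omega_cube hω
  refine Stmt14Aux.rank_aux ω hω (H * gf4Dagger H) _ ?_ ?_ ?_ ?_ <;> intro i j
  · show gf4TrToGF2 (∑ t, (ω * H i t) * (ω * H j t) ^ 2) = _
    congr 1
    rw [Matrix.mul_apply]
    refine Finset.sum_congr rfl fun t _ => ?_
    show (ω * H i t) * (ω * H j t) ^ 2 = H i t * (H j t) ^ 2
    linear_combination (H i t * (H j t) ^ 2) * hω3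
  · show gf4TrToGF2 (∑ t, (ω * H i t) * (ω ^ 2 * H j t) ^ 2) = _
    congr 1
    rw [Matrix.mul_apply, Finset.mul_sum]
    refine Finset.sum_congr rfl fun t _ => ?_
    show (ω * H i t) * (ω ^ 2 * H j t) ^ 2 = ω ^ 2 * (H i t * (H j t) ^ 2)
    linear_combination (ω ^ 2 * H i t * (H j t) ^ 2) * hω3
  · show gf4TrToGF2 (∑ t, (ω ^ 2 * H i t) * (ω * H j t) ^ 2) = _
    congr 1
    rw [Matrix.mul_apply, Finset.mul_sum]
    refine Finset.sum_congr rfl fun t _ => ?_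
    show (ω ^ 2 * H i t) * (ω * H j t) ^ 2 = ω * (H i t * (H j t) ^ 2)
    linear_combination (ω * H i t * (H j t) ^ 2) * hω3
  · show gf4TrToGF2 (∑ t, (ω ^ 2 * H i t) * (ω ^ 2 * H j t) ^ 2) = _
    congr 1
    rw [Matrix.mul_apply]
    refine Finset.sum_congr rfl fun t _ => ?_
    show (ω ^ 2 * H i t) * (ω ^ 2 * H j t) ^ 2 = H i t * (H j t) ^ 2
    linear_combination ((ω ^ 3 + 1) * H i t * (H j t) ^ 2) * hω3
end

section
/- For the convolutional check matrix over GF(2)(D) with Z-part rows [0; (h(D), D, 0, 1, h(D)); (0,0,D,D,D); (0, D⁻¹, 1, D⁻¹, 0); (0, D⁻¹, 0, 0, 0)] and X-part rows [(h(D),0,D,1,h(D)); 0; (0,1,0,1,1); 0; (0,0,1,0,0)] where h(D)=1+D, the shifted symplectic product matrix H_X(D)H_Z^T(D⁻¹) + H_Z(D)H_X^T(D⁻¹) equals the 5×5 binary matrix with ones exactly at positions (1,2),(2,1),(4,5),(5,4), which has rank 4. -/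
/-!
Each entry of the symplectic product is a Laurent polynomial in `D` that collapses using only
`D * D⁻¹ = 1` and `2 = 0`, so the computation holds over any field of characteristic 2 and any
nonzero `D`. The result is `diag(1, 1, 0, 1, 1)` with columns permuted by `(0 1)(3 4)`,
so its rank is the number of nonzero diagonal entries.
-/

open Matrix

theorem Matrix.rank_diagonal_submatrix_perm {m K : Type*} [Fintype m] [DecidableEq m] [Field K]
    [DecidableEq K] (w : m → K) (σ : Equiv.Perm m) :
    ((diagonal w).submatrix id σ).rank = Fintype.card {i // w i ≠ 0} :=
  (rank_submatrix _ (Equiv.refl m) σ).trans (rank_diagonal w)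

section CheckMatrix

variable {K : Type*} [Field K]

def checkZ (D : K) : Matrix (Fin 5) (Fin 5) K :=
  !![0, 0, 0, 0, 0;
     1 + D, D, 0, 1, 1 + D;
     0, 0, D, D, D;
     0, D⁻¹, 1, D⁻¹, 0;
     0, D⁻¹, 0, 0, 0]

def checkX (D : K) : Matrix (Fin 5) (Fin 5) K :=
  !![1 + D, 0, D, 1, 1 + D;
     0, 0, 0, 0, 0;
     0, 1, 0, 1, 1;
     0, 0, 0, 0, 0;
     0, 0, 1, 0, 0]

theorem checkX_mul_transpose_checkZ_inv_add [CharP K 2] {D : K} (hD : D ≠ 0) :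
    checkX D * (checkZ D⁻¹)ᵀ + checkZ D * (checkX D⁻¹)ᵀ =
      !![0, 1, 0, 0, 0;
         1, 0, 0, 0, 0;
         0, 0, 0, 0, 0;
         0, 0, 0, 0, 1;
         0, 0, 0, 1, 0] := by
  ext i j
  simp only [Matrix.add_apply, mul_apply, transpose_apply, Fin.sum_univ_five]
  fin_cases i <;> fin_cases j <;>
    simp only [checkX, checkZ, inv_inv, of_apply, cons_val', cons_val, cons_val_zero,
      cons_val_one, cons_val_fin_one, Fin.isValue, Fin.mk_one, Fin.reduceFinMk, Fin.zero_eta,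
      mul_zero, zero_mul, mul_one, one_mul, add_zero, zero_add]
  all_goals
    field_simp
    ring_nf
    reduce_mod_char!

theorem rank_hyperbolic_pairs :
    (!![0, 1, 0, 0, 0;
        1, 0, 0, 0, 0;
        0, 0, 0, 0, 0;
        0, 0, 0, 0, 1;
        0, 0, 0, 1, 0] : Matrix (Fin 5) (Fin 5) K).rank = 4 := by
  classical
  let σ : Equiv.Perm (Fin 5) := Equiv.swap 0 1 * Equiv.swap 3 4
  have hperm : (!![0, 1, 0, 0, 0; 1, 0, 0, 0, 0; 0, 0, 0, 0, 0; 0, 0, 0, 0, 1; 0, 0, 0, 1, 0] :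
      Matrix (Fin 5) (Fin 5) K) = (diagonal ![1, 1, 0, 1, 1]).submatrix id σ := by
    ext i j
    fin_cases i <;> fin_cases j <;> rfl
  rw [hperm, rank_diagonal_submatrix_perm, Fintype.card_subtype, Finset.card_filter]
  simp [Fin.sum_univ_five]

end CheckMatrix

theorem stmt_18 :
    letI F := RatFunc (ZMod 2)
    letI D : F := RatFunc.X
    letI h : F := 1 + D
    letI hinv : F := 1 + D⁻¹
    -- the Z-part H_Z(D) and X-part H_X(D) of the check matrix
    letI HZ : Matrix (Fin 5) (Fin 5) F :=
      !![0, 0, 0, 0, 0;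
         h, D, 0, 1, h;
         0, 0, D, D, D;
         0, D⁻¹, 1, D⁻¹, 0;
         0, D⁻¹, 0, 0, 0]
    letI HX : Matrix (Fin 5) (Fin 5) F :=
      !![h, 0, D, 1, h;
         0, 0, 0, 0, 0;
         0, 1, 0, 1, 1;
         0, 0, 0, 0, 0;
         0, 0, 1, 0, 0]
    -- the matrices H_Z(D⁻¹) and H_X(D⁻¹), obtained by substituting D ↦ D⁻¹
    letI HZinv : Matrix (Fin 5) (Fin 5) F :=
      !![0, 0, 0, 0, 0;
         hinv, D⁻¹, 0, 1, hinv;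
         0, 0, D⁻¹, D⁻¹, D⁻¹;
         0, D, 1, D, 0;
         0, D, 0, 0, 0]
    letI HXinv : Matrix (Fin 5) (Fin 5) F :=
      !![hinv, 0, D⁻¹, 1, hinv;
         0, 0, 0, 0, 0;
         0, 1, 0, 1, 1;
         0, 0, 0, 0, 0;
         0, 0, 1, 0, 0]
    letI Ω := HX * HZinv.transpose + HZ * HXinv.transpose
    Ω = !![0, 1, 0, 0, 0;
           1, 0, 0, 0, 0;
           0, 0, 0, 0, 0;
           0, 0, 0, 0, 1;
           0, 0, 0, 1, 0] ∧ Ω.rank = 4 := by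
  have hΩ := checkX_mul_transpose_checkZ_inv_add (RatFunc.X_ne_zero (K := ZMod 2))
  simp only [checkX, checkZ, inv_inv] at hΩ
  exact ⟨hΩ, hΩ ▸ rank_hyperbolic_pairs⟩
end
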